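/- Let C be a free semi-theory, C̄ its completion, and Φ_C : C → C̄ the completion functor. Then restriction along Φ_C induces an isomorphism of categories Φ_C^* : Alg^{C̄} → Alg^C between the category of strict C̄-algebras and the category of strict C-algebras. -/

import Mathlib

open CategoryTheory Limits Topology Topology.Homotopy

noncomputable section

namespace SemiThPaper

/-! ### Weak homotopy equivalences -/

/-- The map induced by a continuous map on homotopy "groups" (sets for `N = Fin 0`). -/
def HomotopyGroup.map {X Y : Type} [TopologicalSpace X] [TopologicalSpace Y]
    (f : C(X, Y)) (N : Type) (x : X) :
    HomotopyGroup N X x → HomotopyGroup N Y (f x) :=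
  Quotient.map
    (fun g => ⟨f.comp g.1, fun y hy => by
      simp only [ContinuousMap.comp_apply]
      rw [g.2 y hy]⟩)
    (fun g h H => H.elim fun H => ⟨H.compContinuousMap f⟩)

/-- The map induced on path components. -/
def ZerothHomotopy.map {X Y : Type} [TopologicalSpace X] [TopologicalSpace Y]
    (f : C(X, Y)) : ZerothHomotopy X → ZerothHomotopy Y :=
  Quotient.map f (fun _ _ h => h.elim fun γ => ⟨γ.map f.continuous⟩)

/-- A weak homotopy equivalence of topological spaces: a continuous map inducing a
bijection on path components and on all homotopy groups at all basepoints. -/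
def IsWeakHomotopyEquiv {X Y : TopCat} (f : X ⟶ Y) : Prop :=
  Function.Bijective (ZerothHomotopy.map (f.hom : C(X, Y))) ∧
    ∀ (n : ℕ) (x : X), Function.Bijective (HomotopyGroup.map (f.hom : C(X, Y)) (Fin n) x)

/-- A weak equivalence of simplicial sets: a map whose geometric realization is a
weak homotopy equivalence. -/
def WeakEquiv {A B : SSet} (f : A ⟶ B) : Prop :=
  IsWeakHomotopyEquiv (SSet.toTop.map f)


/-! ### Semi-theories -/

/-- The objects `[1], [2], [3], …` of a semi-theory, indexed by positive integers. -/
@[ext]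
structure Ob : Type where
  val : ℕ+

instance : Coe ℕ+ Ob := ⟨Ob.mk⟩

/-- An (unpointed) semi-theory: a category with objects `[1], [2], …`
together with distinguished projection morphisms `p^n_k : [n] ⟶ [1]`, where `p^1_1 = 𝟙 [1]`. -/
structure SemiTheory : Type 1 where
  cat : Category.{0, 0} Ob
  proj : ∀ n : ℕ+, Fin n → @Quiver.Hom Ob cat.toCategoryStruct.toQuiver ⟨n⟩ ⟨1⟩
  proj_one : proj 1 ⟨0, Nat.one_pos⟩ = cat.toCategoryStruct.id ⟨1⟩

/-- The category of diagrams of simplicial sets over (the underlying category of)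
a semi-theory. -/
abbrev SemiTheory.Diag (S : SemiTheory) : Type 1 :=
  @CategoryTheory.Functor Ob S.cat SSet _

/-- The `n`-fold levelwise power of a simplicial set. -/
@[simps]
def finPow (n : ℕ+) (A : SSet) : SSet where
  obj m := Fin n → A.obj m
  map θ := TypeCat.ofHom fun a k => A.map θ (a k)

/-- The canonical comparison map `X[n] ⟶ X[1]^n` of a diagram over a semi-theory,
whose components are induced by the projections. -/
def SemiTheory.projFan (S : SemiTheory) (X : S.Diag) (n : ℕ+) :
    (letI := S.cat; (X.obj ⟨n⟩ ⟶ finPow n (X.obj ⟨1⟩))) :=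
  letI := S.cat
  { app := fun m => TypeCat.ofHom fun a k => (X.map (S.proj n k)).app m a
    naturality := fun m m' θ => by
      apply ConcreteCategory.hom_ext; intro a
      funext k
      exact ConcreteCategory.congr_hom ((X.map (S.proj n k)).naturality θ) a }

/-- A strict algebra over a semi-theory: the comparison maps `X[n] ⟶ X[1]^n` are
isomorphisms for all `n > 1`. -/
def SemiTheory.IsStrictAlgebra (S : SemiTheory) (X : S.Diag) : Prop :=
  ∀ n : ℕ+, 1 < (n : ℕ) → IsIso (S.projFan X n)

/-- A homotopy algebra over a semi-theory: the comparison maps `X[n] ⟶ X[1]^n` are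
weak equivalences of simplicial sets for all `n > 1`. -/
def SemiTheory.IsHomotopyAlgebra (S : SemiTheory) (X : S.Diag) : Prop :=
  ∀ n : ℕ+, 1 < (n : ℕ) → WeakEquiv (S.projFan X n)

/-- A semi-theory is an algebraic theory if composition with the projections induces
bijections `Hom([m],[n]) ≅ Hom([m],[1])^n` for all `m` and all `n > 1`. -/
def SemiTheory.IsAlgebraic (S : SemiTheory) : Prop :=
  letI := S.cat
  ∀ (m n : ℕ+), 1 < (n : ℕ) →
    Function.Bijective (fun (f : (⟨m⟩ : Ob) ⟶ ⟨n⟩) (k : Fin n) => f ≫ S.proj n k)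

/-- The comparison map `X[n] ⟶ X[1]^n` for a diagram of simplicial sets over any
category equipped with objects `[n]` and projection morphisms. -/
def projFanAt {C : Type} [Category.{0} C] (o : ℕ+ → C) (p : ∀ n : ℕ+, Fin n → (o n ⟶ o 1))
    (X : C ⥤ SSet) (n : ℕ+) : X.obj (o n) ⟶ finPow n (X.obj (o 1)) where
  app m := TypeCat.ofHom fun a k => (X.map (p n k)).app m a
  naturality m m' θ := by
    apply ConcreteCategory.hom_ext; intro a
    funext k
    exact ConcreteCategory.congr_hom ((X.map (p n k)).naturality θ) a

/-- Strictness of a diagram with respect to given objects and projections. -/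
def IsStrictAt {C : Type} [Category.{0} C] (o : ℕ+ → C)
    (p : ∀ n : ℕ+, Fin n → (o n ⟶ o 1)) (X : C ⥤ SSet) : Prop :=
  ∀ n : ℕ+, 1 < (n : ℕ) → IsIso (projFanAt o p X n)

/-- The homotopy-algebra condition for a diagram with respect to given objects
and projections. -/
def IsHomotopyAt {C : Type} [Category.{0} C] (o : ℕ+ → C)
    (p : ∀ n : ℕ+, Fin n → (o n ⟶ o 1)) (X : C ⥤ SSet) : Prop :=
  ∀ n : ℕ+, 1 < (n : ℕ) → WeakEquiv (projFanAt o p X n)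

/-! ### Free semi-theories -/

/-- Generating data for a free semi-theory: a family of free generators that are
not projections (the projections are added separately as free generators). -/
structure GenData : Type 1 where
  gen : ℕ+ → ℕ+ → Type

/-- The generating quiver of the free semi-theory on `G`: the generators of `G`
together with projection arrows `p^n_k : [n] → [1]` for `n > 1`
(the projection `p^1_1` is the identity, i.e. the empty path). -/
inductive Arr (G : GenData) : ℕ+ → ℕ+ → Type
  | gen {a b : ℕ+} : G.gen a b → Arr G a b
  | proj {n : ℕ+} (h : 1 < (n : ℕ)) (k : Fin n) : Arr G n 1

/-- The object type of the free semi-theory on `G` (a copy of `Ob`). -/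
def FreeOb (G : GenData) : Type := Ob

instance freeQuiver (G : GenData) : Quiver (FreeOb G) :=
  ⟨fun a b => Arr G (Ob.val a) (Ob.val b)⟩

/-- The free semi-theory on `G`, as a category: the paths category on the
generating quiver. -/
abbrev FreeST (G : GenData) := CategoryTheory.Paths (FreeOb G)

/-- The object `[n]` of the free semi-theory. -/
def FreeST.of (G : GenData) (n : ℕ+) : FreeST G := (⟨n⟩ : Ob)

/-- The generating projection arrow, as an arrow of the generating quiver. -/
def projArr (G : GenData) {n : ℕ+} (h : 1 < (n : ℕ)) (k : Fin n) :
    @Quiver.Hom (FreeOb G) _ (FreeST.of G n) (FreeST.of G 1) := Arr.proj h k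

/-- The projection `p^n_k` in the free semi-theory. -/
def projPath (G : GenData) (n : ℕ+) (k : Fin n) : FreeST.of G n ⟶ FreeST.of G 1 :=
  if h : 1 < (n : ℕ) then (projArr G h k).toPath
  else eqToHom (congrArg (FreeST.of G)
    (PNat.coe_injective (by
      rw [PNat.one_coe]
      exact le_antisymm (not_lt.1 h) n.pos)))

/-- The free semi-theory on `G`, as a semi-theory. -/
def freeSemiTheory (G : GenData) : SemiTheory where
  cat := inferInstanceAs (Category (FreeST G))
  proj n k := projPath G n k
  proj_one := by
    show projPath G 1 ⟨0, Nat.one_pos⟩ = _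
    rw [projPath, dif_neg (by norm_num)]
    rfl

/-- The initial semi-theory `P` has no generators besides the projections. -/
def emptyGen : GenData := ⟨fun _ _ => PEmpty⟩

/-- The underlying category of the initial semi-theory `P`. -/
abbrev PCat := FreeST emptyGen

/-- The initial semi-theory `P`: its only non-identity morphisms are the projections. -/
def PTheory : SemiTheory := freeSemiTheory emptyGen

/-- The action of the unique morphism of semi-theories `P ⟶ C` on generating arrows. -/
def jArr (G : GenData) : ∀ {a b : ℕ+}, Arr emptyGen a b →
    @Quiver.Path (FreeOb G) _ ((⟨a⟩ : Ob) : FreeST G) ((⟨b⟩ : Ob) : FreeST G)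
  | _, _, .gen α => α.elim
  | _, _, .proj h k => (projArr G h k).toPath

/-- The unique morphism of semi-theories `P ⟶ C` into a free semi-theory. -/
def Jfree (G : GenData) : PCat ⥤ FreeST G :=
  Paths.lift
    { obj := fun n => (n : FreeST G)
      map := fun {a b} e => jArr G e }

/-! ### The completion of a free semi-theory -/

/-- Trees representing the morphisms `[n] ⟶ [1]` of the completion `C̄` of a free
semi-theory: either a single edge labelled by a projection `p^n_k`, or a tree whose
lowest edge is labelled by a component `α_i` of a non-projection generator
`α : [m] ⟶ [r]` and which is obtained by grafting `m` smaller trees. -/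
inductive CTree (G : GenData) (n : ℕ+) : Type
  | proj (k : Fin n) : CTree G n
  | node {m r : ℕ+} (α : G.gen m r) (i : Fin r) (ts : Fin m → CTree G n) : CTree G n

/-- Morphisms `[n] ⟶ [m]` in the completion: `m`-tuples of trees. -/
def CompHom (G : GenData) (n m : ℕ+) : Type := Fin m → CTree G n

/-- Grafting: substituting the trees `T k` for the initial edges labelled `p^m_k`. -/
def CTree.graft {G : GenData} {n m : ℕ+} : CTree G m → CompHom G n m → CTree G n
  | .proj k, T => T k
  | .node α i ts, T => .node α i (fun j => (ts j).graft T)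

/-- The identity of the completion. -/
def compId (G : GenData) (n : ℕ+) : CompHom G n n := fun k => .proj k

/-- Composition in the completion, by grafting. -/
def compComp {G : GenData} {a b c : ℕ+} (T : CompHom G a b) (S : CompHom G b c) :
    CompHom G a c :=
  fun j => (S j).graft T

theorem CTree.graft_id {G : GenData} {m : ℕ+} (t : CTree G m) :
    t.graft (compId G m) = t := by
  induction t with
  | proj k => rfl
  | node α i ts ih =>
      simp only [CTree.graft]
      congr 1
      funext j
      exact ih j

theorem CTree.graft_graft {G : GenData} {a b c : ℕ+} (s : CTree G c)
    (U : CompHom G b c) (T : CompHom G a b) :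
    (s.graft U).graft T = s.graft (compComp T U) := by
  induction s with
  | proj k => rfl
  | node α i ts ih =>
      simp only [CTree.graft]
      congr 1
      funext j
      exact ih j

/-- The object type of the completion (a copy of `Ob`). -/
def CompOb (G : GenData) : Type := Ob

/-- The completion `C̄` of a free semi-theory, as a category. -/
instance compCategory (G : GenData) : Category (CompOb G) where
  Hom n m := CompHom G (Ob.val n) (Ob.val m)
  id n := compId G _
  comp f g := compComp f g
  id_comp f := funext fun j => CTree.graft_id _
  comp_id f := rfl
  assoc f g h := funext fun j => (CTree.graft_graft _ _ _).symm

/-- The object `[n]` of the completion. -/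
def CompOb.of (G : GenData) (n : ℕ+) : CompOb G := (⟨n⟩ : Ob)

/-- The projection `p̂^n_k` of the completion: a single edge labelled `p^n_k`. -/
def compProj (G : GenData) (n : ℕ+) (k : Fin n) : CompOb.of G n ⟶ CompOb.of G 1 :=
  fun _ => .proj k

/-- The completion, as a semi-theory. -/
def compSemiTheory (G : GenData) : SemiTheory where
  cat := inferInstanceAs (Category (CompOb G))
  proj n k := compProj G n k
  proj_one := by
    funext i
    have h0 : i = ⟨0, Nat.one_pos⟩ := Fin.ext (Nat.lt_one_iff.mp i.isLt)
    rw [h0]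
    rfl

/-- The completion functor `Φ` on generating arrows. -/
def phiArr (G : GenData) : ∀ {a b : ℕ+}, Arr G a b → CompHom G a b
  | _, _, .gen α => fun i => .node α i (fun k => .proj k)
  | _, _, .proj _ k => fun _ => .proj k

/-- The completion functor `Φ_C : C ⟶ C̄` of a free semi-theory. -/
def phi (G : GenData) : FreeST G ⥤ CompOb G :=
  Paths.lift
    { obj := fun n => (n : CompOb G)
      map := fun {a b} e => phiArr G e }

/-! ### Discrete simplicial sets, products, mapping complexes -/

/-- The discrete simplicial set on a type. -/
@[simps]
def disc (A : Type) : SSet where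
  obj _ := A
  map _ := TypeCat.ofHom id

/-- The map of discrete simplicial sets induced by a function. -/
@[simps]
def disc.map {A B : Type} (f : A → B) : disc A ⟶ disc B where
  app _ := TypeCat.ofHom f

/-- The diagram of (discrete) simplicial sets corepresented by the object `[n]`
of a semi-theory. -/
def SemiTheory.corep (S : SemiTheory) (n : ℕ+) : S.Diag :=
  letI := S.cat
  { obj := fun m => disc ((⟨n⟩ : Ob) ⟶ m)
    map := fun f => disc.map (fun g => g ≫ f)
    map_id := fun m => by
      apply NatTrans.ext
      funext x; apply ConcreteCategory.hom_ext; intro g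
      show g ≫ 𝟙 m = g
      exact Category.comp_id _
    map_comp := fun f f' => by
      apply NatTrans.ext
      funext x; apply ConcreteCategory.hom_ext; intro g
      show g ≫ (_ ≫ _) = _
      exact (Category.assoc _ _ _).symm }

/-- Levelwise product of two simplicial sets. -/
@[simps]
def mulC (A K : SSet) : SSet where
  obj m := A.obj m × K.obj m
  map θ := TypeCat.ofHom fun p => (A.map θ p.1, K.map θ p.2)
  map_id m := by apply ConcreteCategory.hom_ext; intro p; simp
  map_comp f g := by apply ConcreteCategory.hom_ext; intro p; simp

/-- `f × id` on levelwise products. -/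
@[simps]
def mulC.mapLeft {A B : SSet} (f : A ⟶ B) (K : SSet) : mulC A K ⟶ mulC B K where
  app m := TypeCat.ofHom fun p => (f.app m p.1, p.2)
  naturality m m' θ := by
    apply ConcreteCategory.hom_ext; intro p
    simp only [mulC_obj, mulC_map, types_comp_apply]
    show (f.app m' (A.map θ p.1), K.map θ p.2) = (B.map θ (f.app m p.1), K.map θ p.2)
    exact Prod.ext (NatTrans.naturality_apply f θ p.1) rfl

/-- `id × g` on levelwise products. -/
@[simps]
def mulC.mapRight (A : SSet) {K L : SSet} (g : K ⟶ L) : mulC A K ⟶ mulC A L where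
  app m := TypeCat.ofHom fun p => (p.1, g.app m p.2)
  naturality m m' θ := by
    apply ConcreteCategory.hom_ext; intro p
    simp only [mulC_obj, mulC_map, types_comp_apply]
    show (A.map θ p.1, g.app m' (K.map θ p.2)) = (A.map θ p.1, L.map θ (g.app m p.2))
    exact Prod.ext rfl (NatTrans.naturality_apply g θ p.2)

theorem mulC.mapRight_id (A K : SSet) : mulC.mapRight A (𝟙 K) = 𝟙 (mulC A K) := by
  apply NatTrans.ext; funext x; apply ConcreteCategory.hom_ext; intro p; rfl

theorem mulC.mapRight_comp (A : SSet) {K L M : SSet} (g : K ⟶ L) (h : L ⟶ M) :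
    mulC.mapRight A (g ≫ h) = mulC.mapRight A g ≫ mulC.mapRight A h := by
  apply NatTrans.ext; funext x; apply ConcreteCategory.hom_ext; intro p; rfl

/-- Naturality, in applied form. -/
theorem natApply {C : Type} [Category C] {X Y : C ⥤ SSet} (f : X ⟶ Y)
    {c c' : C} (φ : c ⟶ c') (x : SimplexCategoryᵒᵖ) (a : (X.obj c).obj x) :
    (f.app c').app x ((X.map φ).app x a) = (Y.map φ).app x ((f.app c).app x a) :=
  ConcreteCategory.congr_hom (NatTrans.congr_app (f.naturality φ) x) a

/-- The objectwise product of a diagram of simplicial sets with a constant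
simplicial set. -/
@[simps]
def prodConst {C : Type} [Category C] (X : C ⥤ SSet) (K : SSet) : C ⥤ SSet where
  obj c := mulC (X.obj c) K
  map f := mulC.mapLeft (X.map f) K
  map_id c := by
    apply NatTrans.ext; funext x; apply ConcreteCategory.hom_ext; intro p
    show ((X.map (𝟙 c)).app x p.1, p.2) = p
    rw [X.map_id]
    rfl
  map_comp f g := by
    apply NatTrans.ext; funext x; apply ConcreteCategory.hom_ext; intro p
    show ((X.map (f ≫ g)).app x p.1, p.2) = _
    rw [X.map_comp]
    rfl

/-- Functoriality of `prodConst` in the diagram variable. -/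
@[simps]
def prodConst.mapX {C : Type} [Category C] {X X' : C ⥤ SSet} (f : X ⟶ X') (K : SSet) :
    prodConst X K ⟶ prodConst X' K where
  app c := mulC.mapLeft (f.app c) K
  naturality c c' φ := by
    apply NatTrans.ext; funext x; apply ConcreteCategory.hom_ext; intro p
    simp only [prodConst_obj, prodConst_map, NatTrans.comp_app, mulC.mapLeft_app,
      types_comp_apply]
    exact Prod.ext (natApply f φ x p.1) rfl

/-- Functoriality of `prodConst` in the constant variable. -/
@[simps]
def prodConst.mapK {C : Type} [Category C] (X : C ⥤ SSet) {K L : SSet} (g : K ⟶ L) :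
    prodConst X K ⟶ prodConst X L where
  app c := mulC.mapRight (X.obj c) g
  naturality c c' φ := by
    apply NatTrans.ext; funext x; apply ConcreteCategory.hom_ext; intro p
    rfl

theorem prodConst.mapK_id {C : Type} [Category C] (X : C ⥤ SSet) (K : SSet) :
    prodConst.mapK X (𝟙 K) = 𝟙 (prodConst X K) := by
  apply NatTrans.ext; funext c
  exact mulC.mapRight_id _ _

theorem prodConst.mapK_comp {C : Type} [Category C] (X : C ⥤ SSet) {K L M : SSet}
    (g : K ⟶ L) (h : L ⟶ M) :
    prodConst.mapK X (g ≫ h) = prodConst.mapK X g ≫ prodConst.mapK X h := by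
  apply NatTrans.ext; funext c
  exact mulC.mapRight_comp _ _ _

/-- The standard simplex `Δ[k]`, for `k : SimplexCategoryᵒᵖ`. -/
def stdS (k : SimplexCategoryᵒᵖ) : SSet := SSet.stdSimplex.obj k.unop

/-- Functoriality of the standard simplex (contravariantly in `SimplexCategoryᵒᵖ`). -/
def stdMap {k l : SimplexCategoryᵒᵖ} (θ : k ⟶ l) : stdS l ⟶ stdS k :=
  SSet.stdSimplex.map θ.unop

theorem stdMap_id (k : SimplexCategoryᵒᵖ) : stdMap (𝟙 k) = 𝟙 (stdS k) :=
  SSet.stdSimplex.map_id _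

theorem stdMap_comp {k l m : SimplexCategoryᵒᵖ} (θ : k ⟶ l) (η : l ⟶ m) :
    stdMap (θ ≫ η) = stdMap η ≫ stdMap θ :=
  SSet.stdSimplex.map_comp _ _

/-- The simplicial mapping complex of two diagrams of simplicial sets: its
`m`-simplices are the natural transformations `X × Δ[m] ⟶ Y`. -/
def MapCx {C : Type} [Category C] (X Y : C ⥤ SSet) : SSet where
  obj m := prodConst X (stdS m) ⟶ Y
  map {m m'} θ := TypeCat.ofHom fun t => prodConst.mapK X (stdMap θ) ≫ t
  map_id m := by
    apply ConcreteCategory.hom_ext; intro t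
    simp [stdMap_id, prodConst.mapK_id]
  map_comp θ η := by
    apply ConcreteCategory.hom_ext; intro t
    simp [stdMap_comp, prodConst.mapK_comp]

/-- Precomposition on mapping complexes. -/
def MapCx.pre {C : Type} [Category C] {X X' : C ⥤ SSet} (f : X' ⟶ X) (Y : C ⥤ SSet) :
    MapCx X Y ⟶ MapCx X' Y where
  app m := TypeCat.ofHom fun t => prodConst.mapX f (stdS m) ≫ t
  naturality m m' θ := by
    apply ConcreteCategory.hom_ext; intro t
    rfl

/-- Postcomposition on mapping complexes. -/
def MapCx.post {C : Type} [Category C] (X : C ⥤ SSet) {Y Y' : C ⥤ SSet} (g : Y ⟶ Y') :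
    MapCx X Y ⟶ MapCx X Y' where
  app m := TypeCat.ofHom fun t => t ≫ g
  naturality m m' θ := by
    apply ConcreteCategory.hom_ext; intro t
    rfl

/-- Restriction of mapping complexes along a functor. -/
def MapCx.whisk {C D : Type} [Category C] [Category D] (F : D ⥤ C) (X Y : C ⥤ SSet) :
    MapCx X Y ⟶ MapCx (F ⋙ X) (F ⋙ Y) where
  app m := TypeCat.ofHom fun t =>
    (show prodConst (F ⋙ X) (stdS m) ⟶ F ⋙ Y from CategoryTheory.Functor.whiskerLeft F t)
  naturality m m' θ := by
    apply ConcreteCategory.hom_ext; intro t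
    rfl

/-- The simplicial mapping complex of two simplicial sets: its `m`-simplices are
the maps `A × Δ[m] ⟶ B`. -/
def sMap (A B : SSet) : SSet where
  obj m := mulC A (stdS m) ⟶ B
  map {m m'} θ := TypeCat.ofHom fun t => mulC.mapRight A (stdMap θ) ≫ t
  map_id m := by
    apply ConcreteCategory.hom_ext; intro t
    simp [stdMap_id, mulC.mapRight_id]
  map_comp θ η := by
    apply ConcreteCategory.hom_ext; intro t
    simp [stdMap_comp, mulC.mapRight_comp]

/-- Precomposition on simplicial mapping complexes. -/
def sMap.pre {A A' : SSet} (f : A' ⟶ A) (B : SSet) : sMap A B ⟶ sMap A' B where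
  app m := TypeCat.ofHom fun t => mulC.mapLeft f (stdS m) ≫ t
  naturality m m' θ := by
    apply ConcreteCategory.hom_ext; intro t
    rfl

/-- Postcomposition on simplicial mapping complexes. -/
def sMap.post (A : SSet) {B B' : SSet} (g : B ⟶ B') : sMap A B ⟶ sMap A B' where
  app m := TypeCat.ofHom fun t => t ≫ g
  naturality m m' θ := by
    apply ConcreteCategory.hom_ext; intro t
    rfl


/-- The category of strict algebras over the completion `C̄`. -/
abbrev AlgComp (G : GenData) :=
  ObjectProperty.FullSubcategory (fun A : CompOb G ⥤ SSet => IsStrictAt (CompOb.of G) (compProj G) A)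

/-- The category of strict algebras over the free semi-theory `C`. -/
abbrev AlgFree (G : GenData) :=
  ObjectProperty.FullSubcategory (fun A : FreeST G ⥤ SSet => IsStrictAt (FreeST.of G) (projPath G) A)

/-!
A strict `C`-algebra `A` identifies `A[n]` with `A[1]ⁿ`, so a tree `T : [n] ⟶ [1]` of the
completion can be interpreted in `A` by recursion on `T`: a projection edge acts by `A(pⁿₖ)`,
and a vertex with outgoing edge `αᵢ` tuples the interpretations of its subtrees, inverts the
comparison map and applies `A(α ≫ pᵢ)`. Grafting is sent to composition, so this extends `A`
to a strict `C̄`-algebra. Conversely, a strict `C̄`-algebra is recovered from its restriction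
along `Φ`, because every tree is obtained from the images of the generators by tupling (which
strictness turns into morphisms) and composition.
-/

namespace finPow

variable {n : ℕ+} {W X B B' : SSet}

def π (B : SSet) (k : Fin n) : finPow n B ⟶ B where
  app _ := TypeCat.ofHom fun f => f k

def lift (fs : Fin n → (X ⟶ B)) : X ⟶ finPow n B where
  app x := TypeCat.ofHom fun a k => (fs k).app x a
  naturality _ _ θ := by
    ext a
    funext k
    exact ConcreteCategory.congr_hom ((fs k).naturality θ) a

@[simp]
theorem lift_π (fs : Fin n → (X ⟶ B)) (k : Fin n) : lift fs ≫ π B k = fs k := rfl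

theorem comp_lift (g : W ⟶ X) (fs : Fin n → (X ⟶ B)) :
    g ≫ lift fs = lift fun k => g ≫ fs k := rfl

@[ext]
theorem hom_ext {f g : X ⟶ finPow n B} (h : ∀ k, f ≫ π B k = g ≫ π B k) : f = g := by
  ext x a
  funext k
  exact ConcreteCategory.congr_hom (NatTrans.congr_app (h k) x) a

def map (g : B ⟶ B') : finPow n B ⟶ finPow n B' where
  app x := TypeCat.ofHom fun f k => g.app x (f k)
  naturality _ _ θ := by
    ext f
    funext k
    exact ConcreteCategory.congr_hom (g.naturality θ) (f k)

theorem lift_map (fs : Fin n → (X ⟶ B)) (g : B ⟶ B') :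
    lift fs ≫ map g = lift fun k => fs k ≫ g := rfl

end finPow

section projFanAt

variable {C : Type} [Category.{0} C] (o : ℕ+ → C) (p : ∀ n : ℕ+, Fin n → (o n ⟶ o 1))

theorem projFanAt_eq_lift (X : C ⥤ SSet) (n : ℕ+) :
    projFanAt o p X n = finPow.lift fun k => X.map (p n k) := rfl

theorem isIso_projFanAt_one (X : C ⥤ SSet) (h1 : ∀ k, p 1 k = 𝟙 (o 1)) :
    IsIso (projFanAt o p X 1) := by
  let k₀ : Fin (1 : ℕ+) := ⟨0, Nat.one_pos⟩
  refine ⟨finPow.π _ k₀, ?_, ?_⟩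
  · rw [projFanAt_eq_lift, finPow.lift_π, h1, X.map_id]
  ext k : 1
  rw [show k = k₀ from Fin.ext (Nat.lt_one_iff.mp (k.isLt.trans_eq PNat.one_coe)), Category.assoc,
    projFanAt_eq_lift, finPow.lift_π, h1, X.map_id, Category.comp_id, Category.id_comp]

theorem IsStrictAt.isIso_projFanAt {X : C ⥤ SSet} (hX : IsStrictAt o p X)
    (h1 : ∀ k, p 1 k = 𝟙 (o 1)) (n : ℕ+) : IsIso (projFanAt o p X n) := by
  rcases (one_le : 1 ≤ n).lt_or_eq with hn | rfl
  · exact hX n (by exact_mod_cast hn)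
  · exact isIso_projFanAt_one o p X h1

variable {o p}

theorem projFanAt_naturality {X Y : C ⥤ SSet} (φ : X ⟶ Y) (n : ℕ+) :
    φ.app (o n) ≫ projFanAt o p Y n = projFanAt o p X n ≫ finPow.map (φ.app (o 1)) := by
  ext k : 1
  exact (φ.naturality (p n k)).symm

theorem inv_projFanAt_naturality {X Y : C ⥤ SSet} (φ : X ⟶ Y) (n : ℕ+)
    [IsIso (projFanAt o p X n)] [IsIso (projFanAt o p Y n)] :
    inv (projFanAt o p X n) ≫ φ.app (o n) =
      finPow.map (φ.app (o 1)) ≫ inv (projFanAt o p Y n) := by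
  rw [IsIso.eq_comp_inv, Category.assoc, projFanAt_naturality, IsIso.inv_hom_id_assoc]

theorem inv_projFanAt_one (X : C ⥤ SSet) (h1 : ∀ k, p 1 k = 𝟙 (o 1))
    [IsIso (projFanAt o p X 1)] (k : Fin (1 : ℕ+)) :
    inv (projFanAt o p X 1) = finPow.π _ k :=
  IsIso.inv_eq_of_hom_inv_id (by rw [projFanAt_eq_lift, finPow.lift_π, h1, X.map_id])

end projFanAt

section Extension

variable {G : GenData}

abbrev freeFan (A : FreeST G ⥤ SSet) (n : ℕ+) :
    A.obj (FreeST.of G n) ⟶ finPow n (A.obj (FreeST.of G 1)) :=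
  projFanAt (FreeST.of G) (projPath G) A n

abbrev compFan (A : CompOb G ⥤ SSet) (n : ℕ+) :
    A.obj (CompOb.of G n) ⟶ finPow n (A.obj (CompOb.of G 1)) :=
  projFanAt (CompOb.of G) (compProj G) A n

theorem projPath_one (k : Fin (1 : ℕ+)) : projPath G 1 k = 𝟙 (FreeST.of G 1) := by
  rw [projPath, dif_neg (by simp), eqToHom_refl]

theorem compProj_one (k : Fin (1 : ℕ+)) : compProj G 1 k = 𝟙 (CompOb.of G 1) := by
  funext j
  exact congrArg CTree.proj (Subsingleton.elim (α := Fin 1) k j)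

def genArrow {m r : ℕ+} (α : G.gen m r) :
    @Quiver.Hom (FreeOb G) _ (FreeST.of G m) (FreeST.of G r) :=
  Arr.gen α

/-- The edge label `αᵢ`, as a morphism of `C`. -/
def genProj {m r : ℕ+} (α : G.gen m r) (i : Fin r) : FreeST.of G m ⟶ FreeST.of G 1 :=
  (genArrow α).toPath ≫ projPath G r i

variable (A : FreeST G ⥤ SSet) [∀ n, IsIso (freeFan A n)]

def interpTree {n : ℕ+} : CTree G n → (A.obj (FreeST.of G n) ⟶ A.obj (FreeST.of G 1))
  | .proj k => A.map (projPath G n k)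
  | .node α i ts =>
      finPow.lift (fun j => interpTree (ts j)) ≫ inv (freeFan A _) ≫ A.map (genProj α i)

def interpHom {a b : ℕ+} (T : CompHom G a b) : A.obj (FreeST.of G a) ⟶ A.obj (FreeST.of G b) :=
  finPow.lift (fun j => interpTree A (T j)) ≫ inv (freeFan A b)

theorem interpHom_map_projPath {a b : ℕ+} (T : CompHom G a b) (k : Fin b) :
    interpHom A T ≫ A.map (projPath G b k) = interpTree A (T k) := by
  rw [interpHom, Category.assoc, ← finPow.lift_π (fun k => A.map (projPath G b k)) k,
    ← projFanAt_eq_lift, IsIso.inv_hom_id_assoc, finPow.lift_π]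

theorem interpTree_graft {a b : ℕ+} (s : CTree G b) (T : CompHom G a b) :
    interpTree A (s.graft T) = interpHom A T ≫ interpTree A s := by
  induction s with
  | proj k => exact (interpHom_map_projPath A T k).symm
  | node α i ts ih =>
      simp only [CTree.graft, interpTree, ih, ← finPow.comp_lift, Category.assoc]

theorem interpHom_compId (n : ℕ+) : interpHom A (compId G n) = 𝟙 _ :=
  IsIso.hom_inv_id (freeFan A n)

theorem interpHom_compComp {a b c : ℕ+} (T : CompHom G a b) (S : CompHom G b c) :
    interpHom A (compComp T S) = interpHom A T ≫ interpHom A S := by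
  simp only [interpHom, compComp, interpTree_graft, ← finPow.comp_lift, Category.assoc]

def extend : CompOb G ⥤ SSet where
  obj n := A.obj (FreeST.of G n.val)
  map T := interpHom A T
  map_id n := interpHom_compId A n.val
  map_comp T S := interpHom_compComp A T S

theorem interpHom_eq_interpTree {a : ℕ+} (T : CompHom G a 1) (k : Fin (1 : ℕ+)) :
    interpHom A T = interpTree A (T k) := by
  rw [interpHom, inv_projFanAt_one A projPath_one k, finPow.lift_π]

theorem compFan_extend (n : ℕ+) : compFan (extend A) n = freeFan A n := by
  ext k : 1
  exact interpHom_eq_interpTree A (compProj G n k) ⟨0, Nat.one_pos⟩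

theorem isStrictAt_extend : IsStrictAt (CompOb.of G) (compProj G) (extend A) := by
  intro n _
  change IsIso (compFan (extend A) n)
  rw [compFan_extend]
  exact (inferInstance : IsIso (freeFan A n))

variable {A} {B : FreeST G ⥤ SSet} [∀ n, IsIso (freeFan B n)]

theorem interpTree_naturality (φ : A ⟶ B) {n : ℕ+} (t : CTree G n) :
    φ.app (FreeST.of G n) ≫ interpTree B t = interpTree A t ≫ φ.app (FreeST.of G 1) := by
  induction t with
  | proj k => exact (φ.naturality (projPath G n k)).symm
  | node α i ts ih =>
      simp only [interpTree, ← Category.assoc, finPow.comp_lift, ih, ← finPow.lift_map]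
      simp only [Category.assoc, φ.naturality]
      rw [← Category.assoc (inv _), inv_projFanAt_naturality, Category.assoc]

def extendMap (φ : A ⟶ B) : extend A ⟶ extend B where
  app n := φ.app (FreeST.of G n.val)
  naturality a b T := by
    change interpHom A T ≫ _ = _ ≫ interpHom B T
    simp only [interpHom, Category.assoc, inv_projFanAt_naturality]
    simp only [← Category.assoc, finPow.lift_map, finPow.comp_lift, interpTree_naturality]

end Extension

section Completion

variable {G : GenData}

theorem phi_map_toPath {a b : FreeOb G} (e : a ⟶ b) : (phi G).map e.toPath = phiArr G e :=
  Paths.lift_toPath _ e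

theorem phi_map_projPath (n : ℕ+) (k : Fin n) :
    (phi G).map (projPath G n k) = compProj G n k := by
  rcases (one_le : 1 ≤ n).lt_or_eq with hn | rfl
  · rw [projPath, dif_pos (by exact_mod_cast hn)]
    exact phi_map_toPath _
  · rw [projPath_one, compProj_one]
    exact (phi G).map_id _

theorem freeFan_phi_comp (A : CompOb G ⥤ SSet) (n : ℕ+) :
    freeFan (phi G ⋙ A) n = compFan A n := by
  ext k : 1
  exact congrArg A.map (phi_map_projPath n k)

theorem isStrictAt_phi_comp {A : CompOb G ⥤ SSet} (hA : IsStrictAt (CompOb.of G) (compProj G) A) :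
    IsStrictAt (FreeST.of G) (projPath G) (phi G ⋙ A) := by
  intro n hn
  change IsIso (freeFan (phi G ⋙ A) n)
  rw [freeFan_phi_comp]
  exact hA n hn

section Extend

variable (A : FreeST G ⥤ SSet) [∀ n, IsIso (freeFan A n)]

theorem interpHom_phiArr {a b : FreeOb G} (e : a ⟶ b) :
    interpHom A (phiArr G e) = A.map e.toPath := by
  obtain ⟨a⟩ := a
  obtain ⟨b⟩ := b
  change Arr G a b at e
  cases e with
  | proj h k =>
      rw [interpHom_eq_interpTree A _ ⟨0, Nat.one_pos⟩]
      change A.map (projPath G _ k) = _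
      rw [projPath, dif_pos h]
      rfl
  | gen α =>
      have node_eq : ∀ i, interpTree A (.node α i fun k => .proj k) = A.map (genProj α i) :=
        fun i => IsIso.hom_inv_id_assoc (freeFan A _) _
      change finPow.lift (fun i => interpTree A (.node α i fun k => .proj k)) ≫ _ = _
      simp only [node_eq, genProj, A.map_comp, ← finPow.comp_lift]
      rw [Category.assoc, ← projFanAt_eq_lift, IsIso.hom_inv_id, Category.comp_id]
      rfl

theorem phi_comp_extend : phi G ⋙ extend A = A := by
  refine Paths.ext_functor rfl fun a b e => ?_
  change interpHom A ((phi G).map e.toPath) = 𝟙 _ ≫ A.map e.toPath ≫ 𝟙 _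
  rw [Category.id_comp, Category.comp_id, phi_map_toPath]
  exact interpHom_phiArr A e

end Extend

def CTree.toHom {n : ℕ+} (t : CTree G n) : CompOb.of G n ⟶ CompOb.of G 1 := fun _ => t

theorem phi_map_genProj {m r : ℕ+} (α : G.gen m r) (i : Fin r) :
    (phi G).map (genProj α i) = (CTree.node α i fun k => .proj k).toHom := by
  rw [genProj, Functor.map_comp, phi_map_projPath]
  exact congrArg (· ≫ compProj G r i) (phi_map_toPath (genArrow α))

section Restrict

variable (A : CompOb G ⥤ SSet) [∀ n, IsIso (compFan A n)]

instance isIso_freeFan_phi_comp (n : ℕ+) : IsIso (freeFan (phi G ⋙ A) n) := by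
  rw [freeFan_phi_comp]
  exact (inferInstance : IsIso (compFan A n))

theorem interpHom_phi_comp_of_interpTree {a b : ℕ+} (T : CompHom G a b)
    (hT : ∀ j, interpTree (phi G ⋙ A) (T j) = A.map (T j).toHom) :
    interpHom (phi G ⋙ A) T = A.map T := by
  refine (IsIso.comp_inv_eq _).mpr (finPow.hom_ext fun k => ?_)
  rw [finPow.lift_π, hT k]
  exact (A.map_comp T _).trans (congrArg (A.map T ≫ A.map ·) (phi_map_projPath b k).symm)

theorem interpTree_phi_comp {n : ℕ+} (t : CTree G n) :
    interpTree (phi G ⋙ A) t = A.map t.toHom := by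
  induction t with
  | proj k => exact congrArg A.map (phi_map_projPath n k)
  | node α i ts ih =>
      rw [interpTree, ← Category.assoc]
      change interpHom (phi G ⋙ A) ts ≫ _ = _
      rw [interpHom_phi_comp_of_interpTree A ts ih]
      exact (congrArg (A.map _ ≫ A.map ·) (phi_map_genProj α i)).trans (A.map_comp _ _).symm

theorem interpHom_phi_comp {a b : ℕ+} (T : CompHom G a b) :
    interpHom (phi G ⋙ A) T = A.map T :=
  interpHom_phi_comp_of_interpTree A T fun j => interpTree_phi_comp A (T j)

theorem extend_phi_comp : extend (phi G ⋙ A) = A := by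
  refine CategoryTheory.Functor.ext (fun _ => rfl) fun a b T => ?_
  change interpHom (phi G ⋙ A) T = 𝟙 _ ≫ A.map T ≫ 𝟙 _
  rw [Category.id_comp, Category.comp_id]
  exact interpHom_phi_comp A T

end Restrict

end Completion

section Algebras

variable {G : GenData}

instance (A : AlgFree G) (n : ℕ+) : IsIso (freeFan A.obj n) :=
  A.property.isIso_projFanAt _ _ projPath_one n

instance (A : AlgComp G) (n : ℕ+) : IsIso (compFan A.obj n) :=
  A.property.isIso_projFanAt _ _ compProj_one n

def restrictAlg : AlgComp G ⥤ AlgFree G where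
  obj A := ⟨phi G ⋙ A.obj, isStrictAt_phi_comp A.property⟩
  map φ := ObjectProperty.homMk (Functor.whiskerLeft (phi G) φ.hom)

def extendAlg : AlgFree G ⥤ AlgComp G where
  obj A := ⟨extend A.obj, isStrictAt_extend A.obj⟩
  map φ := ObjectProperty.homMk (extendMap φ.hom)

theorem restrictAlg_comp_extendAlg : restrictAlg ⋙ extendAlg = 𝟭 (AlgComp G) := by
  refine CategoryTheory.Functor.ext
    (fun A => ObjectProperty.FullSubcategory.ext (extend_phi_comp A.obj)) fun A B φ => ?_
  ext n : 3
  simp only [Functor.comp_map, Functor.id_map, ObjectProperty.FullSubcategory.comp_hom,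
    ObjectProperty.eqToHom_hom, NatTrans.comp_app, eqToHom_app]
  rfl

theorem extendAlg_comp_restrictAlg : extendAlg ⋙ restrictAlg = 𝟭 (AlgFree G) := by
  refine CategoryTheory.Functor.ext
    (fun A => ObjectProperty.FullSubcategory.ext (phi_comp_extend A.obj)) fun A B φ => ?_
  ext n : 3
  simp only [Functor.comp_map, Functor.id_map, ObjectProperty.FullSubcategory.comp_hom,
    ObjectProperty.eqToHom_hom, NatTrans.comp_app, eqToHom_app]
  rfl

end Algebras

theorem restriction_along_phi_is_isomorphism (G : GenData) :
    ∃ (F : AlgComp G ⥤ AlgFree G) (F' : AlgFree G ⥤ AlgComp G)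
      (hobj : ∀ A : AlgComp G, (F.obj A).obj = phi G ⋙ A.obj),
      (∀ (A B : AlgComp G) (φ : A ⟶ B),
        (F.map φ).hom =
          eqToHom (hobj A) ≫ CategoryTheory.Functor.whiskerLeft (phi G) φ.hom ≫ eqToHom (hobj B).symm) ∧
      F ⋙ F' = 𝟭 (AlgComp G) ∧ F' ⋙ F = 𝟭 (AlgFree G) :=
  ⟨restrictAlg, extendAlg, fun _ => rfl, fun _ _ _ => (Category.id_comp _).symm,
    restrictAlg_comp_extendAlg, extendAlg_comp_restrictAlg⟩

end SemiThPaper
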